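/- arXiv:1602.07755 — 8 statements merged into one kernel-verified Lean document; each statement's English description precedes it below -/
import Mathlib

section
/- The average vector field (AVF) method preserves energy exactly for Hamiltonian systems: if f(x) = S∇H(x) where S is a constant skew-symmetric matrix, and x' satisfies (x' - x)/h = ∫₀¹ f(ξx' + (1-ξ)x) dξ, then H(x') = H(x). -/
/-!
The AVF step reads `x' - x = h • S *ᵥ g`, where `g = ∫₀¹ ∇H(ξ x' + (1 - ξ) x) dξ` is the averaged
gradient. The fundamental theorem of calculus along the segment from `x` to `x'` gives
`H x' - H x = (x' - x) ⬝ᵥ g = h • (S *ᵥ g) ⬝ᵥ g`, and this quadratic form vanishes because `S` is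
skew-symmetric.
-/

open Matrix intervalIntegral

theorem LinearMap.intervalIntegral_comp_comm {E F : Type*} [NormedAddCommGroup E]
    [NormedSpace ℝ E] [FiniteDimensional ℝ E] [NormedAddCommGroup F] [NormedSpace ℝ F]
    [CompleteSpace F] (L : E →ₗ[ℝ] F) {g : ℝ → E} {a b : ℝ}
    (hg : IntervalIntegrable g MeasureTheory.volume a b) :
    ∫ ξ in a..b, L (g ξ) = L (∫ ξ in a..b, g ξ) :=
  (LinearMap.toContinuousLinearMap L).intervalIntegral_comp_comm hg

theorem Matrix.dotProduct_mulVec_self_eq_zero_of_transpose_eq_neg {ι R : Type*} [Fintype ι]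
    [CommRing R] [IsAddTorsionFree R] {S : Matrix ι ι R} (hS : Sᵀ = -S) (v : ι → R) :
    v ⬝ᵥ S *ᵥ v = 0 := by
  refine self_eq_neg.mp ?_
  calc v ⬝ᵥ S *ᵥ v = v ᵥ* S ⬝ᵥ v := dotProduct_mulVec v S v
    _ = Sᵀ *ᵥ v ⬝ᵥ v := by rw [mulVec_transpose]
    _ = -(v ⬝ᵥ S *ᵥ v) := by rw [hS, neg_mulVec, neg_dotProduct, dotProduct_comm]

theorem ContinuousLinearMap.apply_eq_dotProduct {ι : Type*} [Fintype ι] [DecidableEq ι]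
    (L : (ι → ℝ) →L[ℝ] ℝ) (v : ι → ℝ) : L v = v ⬝ᵥ fun i => L (Pi.single i 1) := by
  conv_lhs => rw [← Finset.univ_sum_single v]
  refine (map_sum L _ _).trans (Finset.sum_congr rfl fun i _ => ?_)
  rw [← smul_eq_mul, ← L.map_smul, ← Pi.single_smul', smul_eq_mul, mul_one]

theorem hasDerivAt_segment {E : Type*} [NormedAddCommGroup E] [NormedSpace ℝ E] (x y : E)
    (ξ : ℝ) : HasDerivAt (fun t : ℝ => t • y + (1 - t) • x) (y - x) ξ := by
  have := ((hasDerivAt_id ξ).smul_const y).add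
    (((hasDerivAt_const ξ (1 : ℝ)).sub (hasDerivAt_id ξ)).smul_const x)
  exact this.congr_deriv (by simp [sub_eq_add_neg])

theorem ContDiff.sub_eq_integral_fderiv_segment {E : Type*} [NormedAddCommGroup E]
    [NormedSpace ℝ E] {H : E → ℝ} (hH : ContDiff ℝ 1 H) (x y : E) :
    H y - H x = ∫ ξ in (0 : ℝ)..1, fderiv ℝ H (ξ • y + (1 - ξ) • x) (y - x) := by
  have hpath : Continuous fun ξ : ℝ => ξ • y + (1 - ξ) • x := by fun_prop
  have hFTC := integral_eq_sub_of_hasDerivAt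
    (fun ξ _ => ((hH.differentiable one_ne_zero) _).hasFDerivAt.comp_hasDerivAt ξ
      (hasDerivAt_segment x y ξ))
    (((hH.continuous_fderiv one_ne_zero).comp hpath).clm_apply continuous_const
      |>.intervalIntegrable 0 1)
  simpa using hFTC.symm

section CoordGradient

variable {ι : Type*} [Fintype ι] [DecidableEq ι]

/-- The gradient for the dot product on `ι → ℝ`; Mathlib's `gradient` needs an inner product
space, which `ι → ℝ` (with the sup norm) is not. -/
noncomputable def coordGradient (H : (ι → ℝ) → ℝ) (x : ι → ℝ) : ι → ℝ :=
  fun i => fderiv ℝ H x (Pi.single i 1)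

/-- The discrete gradient of the AVF method. -/
noncomputable def avgGradient (H : (ι → ℝ) → ℝ) (x y : ι → ℝ) : ι → ℝ :=
  ∫ ξ in (0 : ℝ)..1, coordGradient H (ξ • y + (1 - ξ) • x)

theorem ContDiff.continuous_coordGradient {H : (ι → ℝ) → ℝ} (hH : ContDiff ℝ 1 H) :
    Continuous (coordGradient H) :=
  continuous_pi fun _ => (hH.continuous_fderiv one_ne_zero).clm_apply continuous_const

theorem ContDiff.intervalIntegrable_coordGradient_segment {H : (ι → ℝ) → ℝ}
    (hH : ContDiff ℝ 1 H) (x y : ι → ℝ) :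
    IntervalIntegrable (fun ξ : ℝ => coordGradient H (ξ • y + (1 - ξ) • x))
      MeasureTheory.volume 0 1 :=
  (hH.continuous_coordGradient.comp (by fun_prop)).intervalIntegrable 0 1

theorem ContDiff.sub_eq_dotProduct_avgGradient {H : (ι → ℝ) → ℝ} (hH : ContDiff ℝ 1 H)
    (x y : ι → ℝ) : H y - H x = (y - x) ⬝ᵥ avgGradient H x y := by
  rw [hH.sub_eq_integral_fderiv_segment]
  exact (integral_congr fun ξ _ => ContinuousLinearMap.apply_eq_dotProduct _ _).trans
    ((dotProductBilin ℝ ℝ (y - x)).intervalIntegral_comp_comm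
      (hH.intervalIntegrable_coordGradient_segment x y))

end CoordGradient

theorem avf_preserves_energy_general (n : ℕ) (H : (Fin n → ℝ) → ℝ) (hH : ContDiff ℝ 1 H)
    (S : Matrix (Fin n) (Fin n) ℝ) (hS : Sᵀ = -S)
    (f : (Fin n → ℝ) → (Fin n → ℝ))
    (hf : ∀ x, f x = S.mulVec (fun i => fderiv ℝ H x (Pi.single i 1)))
    (h : ℝ) (x x' : Fin n → ℝ)
    (hstep : x' - x = h • ∫ ξ in (0:ℝ)..(1:ℝ), f (ξ • x' + (1 - ξ) • x)) :
    H x' = H x := by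
  have hf' : f = fun y => S *ᵥ coordGradient H y := funext hf
  have hstep' : x' - x = h • S *ᵥ avgGradient H x x' := by
    rw [hstep, hf']
    exact congrArg (h • ·)
      (S.mulVecLin.intervalIntegral_comp_comm (hH.intervalIntegrable_coordGradient_segment x x'))
  have hdiff := hH.sub_eq_dotProduct_avgGradient x x'
  rw [hstep', smul_dotProduct, dotProduct_comm,
    dotProduct_mulVec_self_eq_zero_of_transpose_eq_neg hS, smul_zero] at hdiff
  exact sub_eq_zero.mp hdiff

/-- The average vector field (AVF) method preserves energy exactly for
Hamiltonian systems `f x = S ∇H x` with `S` constant skew-symmetric. -/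
theorem avf_preserves_energy (n : ℕ) (H : (Fin n → ℝ) → ℝ) (hH : ContDiff ℝ 1 H)
    (S : Matrix (Fin n) (Fin n) ℝ) (hS : Sᵀ = -S)
    (f : (Fin n → ℝ) → (Fin n → ℝ))
    (hf : ∀ x, f x = S.mulVec (fun i => fderiv ℝ H x (Pi.single i 1)))
    (h : ℝ) (hh : 0 < h) (x x' : Fin n → ℝ)
    (hstep : x' - x = h • ∫ ξ in (0:ℝ)..(1:ℝ), f (ξ • x' + (1 - ξ) • x)) :
    H x' = H x :=
  avf_preserves_energy_general n H hH S hS f hf h x x' hstep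
end

section
/- The implicit midpoint rule preserves all quadratic first integrals: if I(x) = xᵀAx + bᵀx + c with A symmetric is a first integral of ẋ = f(x) (i.e., ∇I(x)·f(x) = 0 for all x), and x' satisfies (x' - x)/h = f((x + x')/2), then I(x') = I(x). -/
open Matrix

/-!
Since `A` is symmetric, `I x' - I x = (A (x + x') + b) ⬝ (x' - x)`, an exact identity with no
remainder term. For the midpoint rule `A (x + x') + b = 2 A m + b = ∇I(m)` at the midpoint `m`,
and `x' - x = h f(m)`, so the difference is `h ∇I(m) ⬝ f(m) = 0`.
-/

namespace Matrix

variable {R ι : Type*} [CommRing R] [Fintype ι]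

theorem dotProduct_mulVec_comm_of_transpose_eq {A : Matrix ι ι R} (hA : Aᵀ = A) (x y : ι → R) :
    x ⬝ᵥ A *ᵥ y = y ⬝ᵥ A *ᵥ x := by
  rw [dotProduct_mulVec, ← mulVec_transpose, hA, dotProduct_comm]

theorem quadratic_sub_quadratic_of_transpose_eq {A : Matrix ι ι R} (hA : Aᵀ = A) (b x y : ι → R) :
    (y ⬝ᵥ A *ᵥ y + b ⬝ᵥ y) - (x ⬝ᵥ A *ᵥ x + b ⬝ᵥ x) = (A *ᵥ (x + y) + b) ⬝ᵥ (y - x) := by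
  rw [dotProduct_comm _ (y - x), dotProduct_comm b y, dotProduct_comm b x]
  simp only [mulVec_add, sub_dotProduct, dotProduct_add]
  linear_combination dotProduct_mulVec_comm_of_transpose_eq hA x y

end Matrix

theorem midpoint_preserves_quadratic_integrals_general (n : ℕ)
    (f : (Fin n → ℝ) → (Fin n → ℝ))
    (A : Matrix (Fin n) (Fin n) ℝ) (hA : Aᵀ = A) (b : Fin n → ℝ) (c : ℝ)
    (I : (Fin n → ℝ) → ℝ)
    (hI : ∀ x, I x = x ⬝ᵥ A.mulVec x + b ⬝ᵥ x + c)
    (hint : ∀ x, ((2:ℝ) • A.mulVec x + b) ⬝ᵥ f x = 0)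
    (h : ℝ) (x x' : Fin n → ℝ)
    (hstep : x' = x + h • f (((1:ℝ)/2) • (x + x'))) :
    I x' = I x := by
  set m := ((1:ℝ)/2) • (x + x')
  have hsum : x + x' = (2:ℝ) • m := by simp [m, smul_smul]
  have hdiff : x' - x = h • f m := by rw [hstep]; abel
  have key := quadratic_sub_quadratic_of_transpose_eq hA b x x'
  rw [hsum, mulVec_smul, hdiff, dotProduct_smul, hint, smul_zero] at key
  rw [hI, hI]
  linear_combination key

/-- The implicit midpoint rule preserves all quadratic first integrals. -/
theorem midpoint_preserves_quadratic_integrals (n : ℕ)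
    (f : (Fin n → ℝ) → (Fin n → ℝ))
    (A : Matrix (Fin n) (Fin n) ℝ) (hA : Aᵀ = A) (b : Fin n → ℝ) (c : ℝ)
    (I : (Fin n → ℝ) → ℝ)
    (hI : ∀ x, I x = x ⬝ᵥ A.mulVec x + b ⬝ᵥ x + c)
    (hint : ∀ x, ((2:ℝ) • A.mulVec x + b) ⬝ᵥ f x = 0)
    (h : ℝ) (hh : 0 < h) (x x' : Fin n → ℝ)
    (hstep : x' = x + h • f (((1:ℝ)/2) • (x + x'))) :
    I x' = I x :=
  midpoint_preserves_quadratic_integrals_general n f A hA b c I hI hint h x x' hstep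
end

section
/- Kahan's method applied to a quadratic vector field coincides with the Runge–Kutta-type map (x' - x)/h = 2f((x+x')/2) - (1/2)f(x) - (1/2)f(x'): for f with components fᵢ(x) = Σⱼₖ aᵢⱼₖ xⱼxₖ + Σⱼ bᵢⱼ xⱼ + cᵢ with aᵢⱼₖ symmetric in j,k, the Kahan update (xᵢ' - xᵢ)/h = Σⱼₖ aᵢⱼₖ (xⱼxₖ' + xⱼ'xₖ)/2 + Σⱼ bᵢⱼ (xⱼ + xⱼ')/2 + cᵢ is equivalent to the above. -/
/-!
Componentwise, both sides are the same linear combination of the coefficients `a`, `b`, `c`,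
and coefficient by coefficient the claim is the polarization identity
`2 ((u+u')/2) ((v+v')/2) - u v/2 - u' v'/2 = (u v' + u' v)/2`
(and its linear analogue `2 (u+u')/2 - u/2 - u'/2 = (u+u')/2`).
-/

open Finset

section MidpointCombination

variable {𝕜 ι : Type*} [Field 𝕜] [CharZero 𝕜] [Fintype ι]

theorem sum_sum_mul_polarization (A : ι → ι → 𝕜) (x y : ι → 𝕜) :
    ∑ j, ∑ k, A j k * (x j * y k + y j * x k) / 2 =
      2 * ∑ j, ∑ k, A j k * ((1 / 2 : 𝕜) • (x + y)) j * ((1 / 2 : 𝕜) • (x + y)) k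
        - 1 / 2 * ∑ j, ∑ k, A j k * x j * x k
        - 1 / 2 * ∑ j, ∑ k, A j k * y j * y k := by
  simp only [mul_sum, ← sum_sub_distrib]
  refine sum_congr rfl fun j _ => sum_congr rfl fun k _ => ?_
  simp only [Pi.smul_apply, Pi.add_apply, smul_eq_mul]
  ring

theorem sum_mul_midpoint (B : ι → 𝕜) (x y : ι → 𝕜) :
    ∑ j, B j * (x j + y j) / 2 =
      2 * ∑ j, B j * ((1 / 2 : 𝕜) • (x + y)) j
        - 1 / 2 * ∑ j, B j * x j - 1 / 2 * ∑ j, B j * y j := by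
  simp only [mul_sum, ← sum_sub_distrib]
  refine sum_congr rfl fun j _ => ?_
  simp only [Pi.smul_apply, Pi.add_apply, smul_eq_mul]
  ring

theorem kahan_eq_midpoint_combination (A : ι → ι → 𝕜) (B : ι → 𝕜) (C : 𝕜)
    (q : (ι → 𝕜) → 𝕜) (hq : ∀ z, q z = ∑ j, ∑ k, A j k * z j * z k + ∑ j, B j * z j + C)
    (x y : ι → 𝕜) :
    ∑ j, ∑ k, A j k * (x j * y k + y j * x k) / 2 + ∑ j, B j * (x j + y j) / 2 + C =
      2 * q ((1 / 2 : 𝕜) • (x + y)) - 1 / 2 * q x - 1 / 2 * q y := by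
  rw [hq, hq, hq, sum_sum_mul_polarization, sum_mul_midpoint]
  ring

end MidpointCombination

theorem kahan_is_runge_kutta_general (n : ℕ)
    (a : Fin n → Fin n → Fin n → ℝ)
    (b : Fin n → Fin n → ℝ) (c : Fin n → ℝ)
    (f : (Fin n → ℝ) → (Fin n → ℝ))
    (hf : ∀ x i, f x i = (∑ j, ∑ k, a i j k * x j * x k) + (∑ j, b i j * x j) + c i)
    (h : ℝ) (x x' : Fin n → ℝ) :
    (∀ i, x' i - x i =
        h * ((∑ j, ∑ k, a i j k * (x j * x' k + x' j * x k) / 2)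
          + (∑ j, b i j * (x j + x' j) / 2) + c i)) ↔
    x' - x = h • ((2:ℝ) • f (((1:ℝ)/2) • (x + x'))
        - ((1:ℝ)/2) • f x - ((1:ℝ)/2) • f x') := by
  rw [funext_iff]
  refine forall_congr' fun i => ?_
  rw [kahan_eq_midpoint_combination (a i) (b i) (c i) (f · i) (hf · i)]
  simp only [Pi.sub_apply, Pi.smul_apply, smul_eq_mul]

/-- Kahan's method for quadratic vector fields coincides with the
Runge–Kutta-type map `(x'-x)/h = 2f((x+x')/2) - f(x)/2 - f(x')/2`. -/
theorem kahan_is_runge_kutta (n : ℕ)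
    (a : Fin n → Fin n → Fin n → ℝ) (ha : ∀ i j k, a i j k = a i k j)
    (b : Fin n → Fin n → ℝ) (c : Fin n → ℝ)
    (f : (Fin n → ℝ) → (Fin n → ℝ))
    (hf : ∀ x i, f x i = (∑ j, ∑ k, a i j k * x j * x k) + (∑ j, b i j * x j) + c i)
    (h : ℝ) (x x' : Fin n → ℝ) :
    (∀ i, x' i - x i =
        h * ((∑ j, ∑ k, a i j k * (x j * x' k + x' j * x k) / 2)
          + (∑ j, b i j * (x j + x' j) / 2) + c i)) ↔
    x' - x = h • ((2:ℝ) • f (((1:ℝ)/2) • (x + x'))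
        - ((1:ℝ)/2) • f x - ((1:ℝ)/2) • f x') :=
  kahan_is_runge_kutta_general n a b c f hf h x x'
end

section
/- Kahan's method preserves all linear first integrals of quadratic vector fields: if cᵀf(x) = 0 for all x, and x' is given by the Kahan update applied to f, then cᵀx' = cᵀx. -/
open Matrix

/-!
Kahan's right-hand side is an affine combination of values of the vector field itself:
`K(x, x') = ½ f(x + x') + 3⁄2 f(0) - ¼ (f(x) + f(-x) + f(x') + f(-x'))`, as one checks by
expanding the bilinear, linear and constant parts of `f`. Hence every linear functional that
annihilates `f` annihilates the increment `x' - x = h K(x, x')`.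
-/

namespace Kahan

section Polarization

variable {𝕜 V W : Type*} [Field 𝕜] [AddCommGroup V] [Module 𝕜 V] [AddCommGroup W] [Module 𝕜 W]
  (Q : V →ₗ[𝕜] V →ₗ[𝕜] W) (L : V →ₗ[𝕜] W) (c : W)

def quadraticField (x : V) : W := Q x x + L x + c

def polarizedField (x x' : V) : W :=
  (2⁻¹ : 𝕜) • (Q x x' + Q x' x) + (2⁻¹ : 𝕜) • L (x + x') + c

variable [CharZero 𝕜]

theorem polarizedField_eq (x x' : V) :
    polarizedField Q L c x x' =
      (2⁻¹ : 𝕜) • quadraticField Q L c (x + x') + (3 / 2 : 𝕜) • quadraticField Q L c 0 -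
        (4⁻¹ : 𝕜) • (quadraticField Q L c x + quadraticField Q L c (-x) +
          quadraticField Q L c x' + quadraticField Q L c (-x')) := by
  simp only [polarizedField, quadraticField, map_add, map_neg, map_zero, LinearMap.add_apply,
    LinearMap.neg_apply, neg_neg]
  module

theorem map_polarizedField_eq_zero {U : Type*} [AddCommGroup U] [Module 𝕜 U] (φ : W →ₗ[𝕜] U)
    (hφ : ∀ x, φ (quadraticField Q L c x) = 0) (x x' : V) :
    φ (polarizedField Q L c x x') = 0 := by
  simp [polarizedField_eq, hφ]

end Polarization

section Step

variable {𝕜 V : Type*} [Field 𝕜] [AddCommGroup V] [Module 𝕜 V]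

def IsStep (Q : V →ₗ[𝕜] V →ₗ[𝕜] V) (L : V →ₗ[𝕜] V) (c : V) (h : 𝕜) (x x' : V) : Prop :=
  x' - x = h • polarizedField Q L c x x'

theorem IsStep.map_eq [CharZero 𝕜] {U : Type*} [AddCommGroup U] [Module 𝕜 U]
    {Q : V →ₗ[𝕜] V →ₗ[𝕜] V} {L : V →ₗ[𝕜] V} {c : V} {h : 𝕜} {x x' : V}
    (hstep : IsStep Q L c h x x') (φ : V →ₗ[𝕜] U) (hφ : ∀ y, φ (quadraticField Q L c y) = 0) :
    φ x' = φ x := by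
  rw [← sub_eq_zero, ← map_sub, hstep, map_smul, map_polarizedField_eq_zero Q L c φ hφ,
    smul_zero]

end Step

section Coordinates

variable {𝕜 ι : Type*} [Fintype ι]

def tensorBilin [CommSemiring 𝕜] (a : ι → ι → ι → 𝕜) :
    (ι → 𝕜) →ₗ[𝕜] (ι → 𝕜) →ₗ[𝕜] (ι → 𝕜) :=
  LinearMap.mk₂ 𝕜 (fun x y i => ∑ j, ∑ k, a i j k * x j * y k)
    (fun _ _ _ => by ext; simp [Finset.sum_add_distrib, mul_add, add_mul])
    (fun _ _ _ => by ext; simp [Finset.mul_sum, mul_assoc, mul_left_comm])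
    (fun _ _ _ => by ext; simp [Finset.sum_add_distrib, mul_add])
    (fun _ _ _ => by ext; simp [Finset.mul_sum, mul_assoc, mul_left_comm])

theorem tensorBilin_apply [CommSemiring 𝕜] (a : ι → ι → ι → 𝕜) (x y : ι → 𝕜) (i : ι) :
    tensorBilin a x y i = ∑ j, ∑ k, a i j k * x j * y k := rfl

variable [Field 𝕜] (a : ι → ι → ι → 𝕜) (b : ι → ι → 𝕜) (c : ι → 𝕜)

theorem quadraticField_tensorBilin_apply (x : ι → 𝕜) (i : ι) :
    quadraticField (tensorBilin a) (of b).mulVecLin c x i =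
      (∑ j, ∑ k, a i j k * x j * x k) + (∑ j, b i j * x j) + c i := rfl

theorem polarizedField_tensorBilin_apply (x x' : ι → 𝕜) (i : ι) :
    polarizedField (tensorBilin a) (of b).mulVecLin c x x' i =
      (∑ j, ∑ k, a i j k * (x j * x' k + x' j * x k) / 2) + (∑ j, b i j * (x j + x' j) / 2)
        + c i := by
  simp only [polarizedField, Pi.add_apply, Pi.smul_apply, smul_eq_mul, map_add,
    tensorBilin_apply, mulVecLin_apply, mulVec, dotProduct, of_apply, Finset.mul_sum,
    ← Finset.sum_add_distrib]
  congr 1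
  refine Finset.sum_congr rfl fun j _ => congrArg₂ (· + ·) ?_ (by ring)
  exact Finset.sum_congr rfl fun k _ => by ring

end Coordinates

end Kahan

open Kahan

theorem kahan_preserves_linear_integrals_general (n : ℕ)
    (a : Fin n → Fin n → Fin n → ℝ)
    (b : Fin n → Fin n → ℝ) (c : Fin n → ℝ)
    (f : (Fin n → ℝ) → (Fin n → ℝ))
    (hf : ∀ x i, f x i = (∑ j, ∑ k, a i j k * x j * x k) + (∑ j, b i j * x j) + c i)
    (w : Fin n → ℝ) (hint : ∀ x, w ⬝ᵥ f x = 0)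
    (h : ℝ) (x x' : Fin n → ℝ)
    (hstep : ∀ i, x' i - x i =
        h * ((∑ j, ∑ k, a i j k * (x j * x' k + x' j * x k) / 2)
          + (∑ j, b i j * (x j + x' j) / 2) + c i)) :
    w ⬝ᵥ x' = w ⬝ᵥ x := by
  have hf' : f = quadraticField (tensorBilin a) (of b).mulVecLin c := by
    ext y i
    rw [hf, quadraticField_tensorBilin_apply]
  have hkahan : IsStep (tensorBilin a) (of b).mulVecLin c h x x' := by
    ext i
    rw [Pi.sub_apply, hstep, Pi.smul_apply, smul_eq_mul, polarizedField_tensorBilin_apply]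
  subst hf'
  exact hkahan.map_eq (dotProductBilin ℝ ℝ w) hint

/-- Kahan's method preserves all linear first integrals of quadratic vector
fields. -/
theorem kahan_preserves_linear_integrals (n : ℕ)
    (a : Fin n → Fin n → Fin n → ℝ) (ha : ∀ i j k, a i j k = a i k j)
    (b : Fin n → Fin n → ℝ) (c : Fin n → ℝ)
    (f : (Fin n → ℝ) → (Fin n → ℝ))
    (hf : ∀ x i, f x i = (∑ j, ∑ k, a i j k * x j * x k) + (∑ j, b i j * x j) + c i)
    (w : Fin n → ℝ) (hint : ∀ x, w ⬝ᵥ f x = 0)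
    (h : ℝ) (x x' : Fin n → ℝ)
    (hstep : ∀ i, x' i - x i =
        h * ((∑ j, ∑ k, a i j k * (x j * x' k + x' j * x k) / 2)
          + (∑ j, b i j * (x j + x' j) / 2) + c i)) :
    w ⬝ᵥ x' = w ⬝ᵥ x :=
  kahan_preserves_linear_integrals_general n a b c f hf w hint h x x' hstep
end

section
/- The Simpson-rule Runge–Kutta method (x'-x)/h = (1/6)[f(x) + 4f((x+x')/2) + f(x')] preserves every quartic Hamiltonian: if H is a polynomial of degree at most 4 and f(x) = S∇H(x) with S constant skew-symmetric, then H(x') = H(x). -/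
/-!
Restricted to the segment `t ↦ x + t (x' - x)`, a quartic `H` becomes a univariate quartic `Q`,
and Simpson's rule integrates the cubic `Q'` exactly. Hence `H x' - H x` equals `v ⬝ (x' - x) / 6`,
where `v = ∇H x + 4 ∇H m + ∇H x'` is the Simpson average of the gradients, with `m` the midpoint.
The scheme says exactly `x' - x = (h / 6) S v`, and `v ⬝ S v = 0` for skew-symmetric `S`.
-/

open Matrix

open MvPolynomial Polynomial in
theorem MvPolynomial.natDegree_aeval_le_totalDegree {σ R : Type*} [CommSemiring R]
    (P : MvPolynomial σ R) (g : σ → R[X]) (hg : ∀ i, (g i).natDegree ≤ 1) :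
    (aeval g P).natDegree ≤ P.totalDegree := by
  conv_lhs => rw [P.as_sum, map_sum]
  refine natDegree_sum_le_of_forall_le _ _ fun v hv => ?_
  rw [aeval_monomial, Polynomial.algebraMap_eq]
  refine natDegree_C_mul_le _ _ |>.trans <| (natDegree_prod_le _ _).trans ?_
  refine le_trans (Finset.sum_le_sum fun i _ => ?_) (le_totalDegree hv)
  calc (g i ^ v i).natDegree ≤ v i * (g i).natDegree := natDegree_pow_le
    _ ≤ v i := by simpa using Nat.mul_le_mul_left (v i) (hg i)

open Polynomial in
theorem Polynomial.eval_one_sub_eval_zero_eq_simpson {K : Type*} [Field K] [CharZero K]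
    (Q : K[X]) (hQ : Q.natDegree ≤ 4) :
    Q.eval 1 - Q.eval 0 =
      (Q.derivative.eval 0 + 4 * Q.derivative.eval (1 / 2) + Q.derivative.eval 1) / 6 := by
  rw [Q.as_sum_range' 5 (Nat.lt_succ_of_le hQ)]
  simp only [Finset.sum_range_succ, Finset.sum_range_zero, zero_add, derivative_add,
    derivative_monomial, eval_add, eval_monomial]
  push_cast
  ring

theorem Matrix.dotProduct_mulVec_self_eq_zero {n R : Type*} [Fintype n] [CommRing R]
    [IsAddTorsionFree R] {S : Matrix n n R} (hS : Sᵀ = -S) (v : n → R) :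
    v ⬝ᵥ S *ᵥ v = 0 := by
  refine self_eq_neg.mp ?_
  conv_lhs => rw [dotProduct_mulVec, ← mulVec_transpose, hS, neg_mulVec, dotProduct_comm,
    dotProduct_neg]

namespace MvPolynomial

variable {σ : Type*}

noncomputable def evalGradient {R : Type*} [CommSemiring R] (P : MvPolynomial σ R) (y : σ → R) :
    σ → R :=
  fun i => eval y (pderiv i P)

open Polynomial in
noncomputable def restrictLine {R : Type*} [CommSemiring R] (P : MvPolynomial σ R)
    (x d : σ → R) : R[X] :=
  aeval (fun i => Polynomial.C (d i) * Polynomial.X + Polynomial.C (x i)) P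

section CommSemiring

variable {R : Type*} [CommSemiring R] (P : MvPolynomial σ R)

theorem eval_restrictLine (x d : σ → R) (t : R) :
    (P.restrictLine x d).eval t = eval (x + t • d) P := by
  have hline :
      (fun i => Polynomial.aeval t (Polynomial.C (d i) * Polynomial.X + Polynomial.C (x i))) =
        x + t • d := by
    ext i
    simp only [map_add, map_mul, Polynomial.aeval_C, Polynomial.aeval_X, Algebra.algebraMap_self,
      RingHom.id_apply, Pi.add_apply, Pi.smul_apply, smul_eq_mul, mul_comm, add_comm]
  rw [restrictLine, ← Polynomial.coe_aeval_eq_eval, comp_aeval_apply, hline]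
  rfl

theorem natDegree_restrictLine_le (x d : σ → R) :
    (P.restrictLine x d).natDegree ≤ P.totalDegree :=
  P.natDegree_aeval_le_totalDegree _ fun _ => Polynomial.natDegree_linear_le

end CommSemiring

variable {𝕜 : Type*} [NontriviallyNormedField 𝕜] [Fintype σ]

theorem hasFDerivAt_eval (P : MvPolynomial σ 𝕜) (y : σ → 𝕜) :
    HasFDerivAt (fun z => eval z P)
      (∑ i, P.evalGradient y i • (ContinuousLinearMap.proj i : (σ → 𝕜) →L[𝕜] 𝕜)) y := by
  unfold evalGradient
  induction P using MvPolynomial.induction_on with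
  | C a =>
    simp only [eval_C]
    refine (hasFDerivAt_const a y).congr_fderiv ?_
    ext u
    simp
  | add p q hp hq =>
    simp only [map_add]
    refine (hp.add hq).congr_fderiv ?_
    ext u
    simp [add_mul, Finset.sum_add_distrib]
  | mul_X p i hp =>
    simp only [map_mul, eval_X]
    refine (hp.mul (hasFDerivAt_apply i y)).congr_fderiv ?_
    ext u
    classical
    simp [pderiv_X, Pi.single_apply, apply_ite, add_mul, ite_mul, Finset.sum_add_distrib,
      Finset.mul_sum, mul_assoc]

theorem fderiv_eval_apply_single [DecidableEq σ] (P : MvPolynomial σ 𝕜) (y : σ → 𝕜) (i : σ) :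
    fderiv 𝕜 (fun z => eval z P) y (Pi.single i 1) = P.evalGradient y i := by
  simp [(P.hasFDerivAt_eval y).fderiv, Pi.single_apply]

theorem hasDerivAt_eval_add_smul (P : MvPolynomial σ 𝕜) (x d : σ → 𝕜) (t : 𝕜) :
    HasDerivAt (fun s => eval (x + s • d) P) (P.evalGradient (x + t • d) ⬝ᵥ d) t := by
  have hline : HasDerivAt (fun s : 𝕜 => x + s • d) d t := by
    simpa using ((hasDerivAt_id t).smul_const d).const_add x
  refine ((P.hasFDerivAt_eval _).comp_hasDerivAt t hline).congr_deriv ?_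
  simp [dotProduct]

theorem eval_derivative_restrictLine (P : MvPolynomial σ 𝕜) (x d : σ → 𝕜) (t : 𝕜) :
    (P.restrictLine x d).derivative.eval t = P.evalGradient (x + t • d) ⬝ᵥ d := by
  refine ((P.restrictLine x d).hasDerivAt t).unique ?_
  simpa only [eval_restrictLine] using P.hasDerivAt_eval_add_smul x d t

theorem eval_sub_eval_eq_simpson [CharZero 𝕜] {P : MvPolynomial σ 𝕜} (hP : P.totalDegree ≤ 4)
    (x x' : σ → 𝕜) :
    eval x' P - eval x P =
      (P.evalGradient x + (4 : 𝕜) • P.evalGradient ((1 / 2 : 𝕜) • (x + x')) + P.evalGradient x')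
        ⬝ᵥ (x' - x) / 6 := by
  have hsimpson := (P.restrictLine x (x' - x)).eval_one_sub_eval_zero_eq_simpson
    ((P.natDegree_restrictLine_le _ _).trans hP)
  have hmid : x + (1 / 2 : 𝕜) • (x' - x) = (1 / 2 : 𝕜) • (x + x') := by
    ext i
    simp
    ring
  simp only [eval_restrictLine, eval_derivative_restrictLine, one_smul, zero_smul, add_zero,
    add_sub_cancel, hmid] at hsimpson
  rw [hsimpson, add_dotProduct, add_dotProduct, smul_dotProduct, smul_eq_mul]

end MvPolynomial

theorem simpson_rk_preserves_quartic_hamiltonians_general (n : ℕ)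
    (H : (Fin n → ℝ) → ℝ)
    (hH : ∃ P : MvPolynomial (Fin n) ℝ, P.totalDegree ≤ 4 ∧
      ∀ x, H x = MvPolynomial.eval x P)
    (S : Matrix (Fin n) (Fin n) ℝ) (hS : Sᵀ = -S)
    (f : (Fin n → ℝ) → (Fin n → ℝ))
    (hf : ∀ x, f x = S.mulVec (fun i => fderiv ℝ H x (Pi.single i 1)))
    (h : ℝ) (x x' : Fin n → ℝ)
    (hstep : x' = x + (h/6) • (f x + (4:ℝ) • f (((1:ℝ)/2) • (x + x')) + f x')) :
    H x' = H x := by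
  obtain ⟨P, hP, hHP⟩ := hH
  obtain rfl : H = fun z => MvPolynomial.eval z P := funext hHP
  have hfS : ∀ y, f y = S *ᵥ P.evalGradient y := fun y => by
    simp only [hf, P.fderiv_eval_apply_single]
  set v :=
    P.evalGradient x + (4 : ℝ) • P.evalGradient ((1 / 2 : ℝ) • (x + x')) + P.evalGradient x'
  have hincr : x' - x = (h / 6) • S *ᵥ v := by
    rw [hstep, add_sub_cancel_left, hfS, hfS, hfS, mulVec_add, mulVec_add, mulVec_smul]
  rw [← sub_eq_zero, MvPolynomial.eval_sub_eval_eq_simpson hP, hincr, dotProduct_smul,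
    dotProduct_mulVec_self_eq_zero hS, smul_zero, zero_div]

/-- The Simpson-rule Runge–Kutta method preserves every quartic Hamiltonian. -/
theorem simpson_rk_preserves_quartic_hamiltonians (n : ℕ)
    (H : (Fin n → ℝ) → ℝ)
    (hH : ∃ P : MvPolynomial (Fin n) ℝ, P.totalDegree ≤ 4 ∧
      ∀ x, H x = MvPolynomial.eval x P)
    (S : Matrix (Fin n) (Fin n) ℝ) (hS : Sᵀ = -S)
    (f : (Fin n → ℝ) → (Fin n → ℝ))
    (hf : ∀ x, f x = S.mulVec (fun i => fderiv ℝ H x (Pi.single i 1)))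
    (h : ℝ) (hh : 0 < h) (x x' : Fin n → ℝ)
    (hstep : x' = x + (h/6) • (f x + (4:ℝ) • f (((1:ℝ)/2) • (x + x')) + f x')) :
    H x' = H x :=
  simpson_rk_preserves_quartic_hamiltonians_general n H hH S hS f hf h x x' hstep
end

section
/- A map of the triangular form x₁ = g₁(x₁',x₂,x₃), x₂' = g₂(x₁',x₂,x₃), x₃' = g₃(x₁',x₂',x₃) in ℝ³ is volume-preserving if and only if ∂x₁/∂x₁' = (∂x₂'/∂x₂)(∂x₃'/∂x₃), assuming the map (x₁,x₂,x₃) ↦ (x₁',x₂',x₃') is a well-defined differentiable map with ∂g₁/∂x₁' ≠ 0. -/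
/-!
The map `Φ` is a composition of three shears, each changing a single coordinate:
`(x₁, x₂, x₃) ↦ (x₁', x₂, x₃) ↦ (x₁', x₂', x₃) ↦ (x₁', x₂', x₃')`.
The Jacobian of a shear is the partial derivative of the new coordinate in the direction of the
old one, so the last two steps contribute `∂x₂'/∂x₂` and `∂x₃'/∂x₃`. The first step is inverse to
the shear `(x₁', x₂, x₃) ↦ (g₁(x₁', x₂, x₃), x₂, x₃)`, so it contributes `(∂x₁/∂x₁')⁻¹`.
-/

namespace LinearMap

variable {R M N : Type*} [CommRing R] [AddCommGroup M] [Module R M] [Module.Free R M]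
  [Module.Finite R M] [AddCommGroup N] [Module R N] [Module.Free R N] [Module.Finite R N]

theorem det_eq_det_fst_comp_comp_inl {f : Module.End R (M × N)}
    (hf : snd R M N ∘ₗ f = snd R M N) : f.det = (fst R M N ∘ₗ f ∘ₗ inl R M N).det := by
  classical
  let b := Module.Free.chooseBasis R M
  let b' := Module.Free.chooseBasis R N
  have hsnd (v : M × N) : (f v).2 = v.2 := LinearMap.congr_fun hf v
  have hblocks : toMatrix (b.prod b') (b.prod b') f =
      Matrix.fromBlocks (toMatrix b b (fst R M N ∘ₗ f ∘ₗ inl R M N))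
        (Matrix.of fun i j => b.repr (f (0, b' j)).1 i) 0 1 := by
    ext (i | i) (j | j) <;>
      simp [toMatrix_apply, hsnd, Matrix.one_apply, Finsupp.single_apply, eq_comm]
  rw [← det_toMatrix (b.prod b'), ← det_toMatrix b, hblocks, Matrix.det_fromBlocks_zero₂₁,
    Matrix.det_one, mul_one]

theorem det_eq_det_snd_comp_comp_inr {f : Module.End R (M × N)}
    (hf : fst R M N ∘ₗ f = fst R M N) : f.det = (snd R M N ∘ₗ f ∘ₗ inr R M N).det := by
  classical
  let b := Module.Free.chooseBasis R M
  let b' := Module.Free.chooseBasis R N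
  have hfst (v : M × N) : (f v).1 = v.1 := LinearMap.congr_fun hf v
  have hblocks : toMatrix (b.prod b') (b.prod b') f =
      Matrix.fromBlocks 1 0 (Matrix.of fun i j => b'.repr (f (b j, 0)).2 i)
        (toMatrix b' b' (snd R M N ∘ₗ f ∘ₗ inr R M N)) := by
    ext (i | i) (j | j) <;>
      simp [toMatrix_apply, hfst, Matrix.one_apply, Finsupp.single_apply, eq_comm]
  rw [← det_toMatrix (b.prod b'), ← det_toMatrix b', hblocks, Matrix.det_fromBlocks_zero₁₂,
    Matrix.det_one, one_mul]

end LinearMap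

section Shear

variable {𝕜 E F : Type*} [NontriviallyNormedField 𝕜] [NormedAddCommGroup E] [NormedSpace 𝕜 E]
  [NormedAddCommGroup F] [NormedSpace 𝕜 F]

open ContinuousLinearMap

theorem det_fderiv_comp {f g : E → E} {x : E} (hf : DifferentiableAt 𝕜 f (g x))
    (hg : DifferentiableAt 𝕜 g x) :
    (fderiv 𝕜 (f ∘ g) x).det = (fderiv 𝕜 f (g x)).det * (fderiv 𝕜 g x).det := by
  rw [fderiv_comp x hf hg, ContinuousLinearMap.det, toLinearMap_comp, LinearMap.det_comp]

def shear₁ (f : 𝕜 × F → 𝕜) (q : 𝕜 × F) : 𝕜 × F := (f q, q.2)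

def shear₂ (f : E × 𝕜 × F → 𝕜) (q : E × 𝕜 × F) : E × 𝕜 × F := (q.1, f q, q.2.2)

def shear₃ (f : E × F × 𝕜 → 𝕜) (q : E × F × 𝕜) : E × F × 𝕜 := (q.1, q.2.1, f q)

theorem HasFDerivAt.shear₁ {f : 𝕜 × F → 𝕜} {f' : 𝕜 × F →L[𝕜] 𝕜} {q : 𝕜 × F}
    (hf : HasFDerivAt f f' q) : HasFDerivAt (shear₁ f) (f'.prod (snd 𝕜 𝕜 F)) q :=
  hf.prodMk hasFDerivAt_snd

theorem HasFDerivAt.shear₂ {f : E × 𝕜 × F → 𝕜} {f' : E × 𝕜 × F →L[𝕜] 𝕜} {q : E × 𝕜 × F}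
    (hf : HasFDerivAt f f' q) :
    HasFDerivAt (shear₂ f) ((fst 𝕜 E (𝕜 × F)).prod (f'.prod (snd 𝕜 𝕜 F ∘L snd 𝕜 E (𝕜 × F)))) q :=
  hasFDerivAt_fst.prodMk (hf.prodMk (hasFDerivAt_snd.comp q hasFDerivAt_snd))

theorem HasFDerivAt.shear₃ {f : E × F × 𝕜 → 𝕜} {f' : E × F × 𝕜 →L[𝕜] 𝕜} {q : E × F × 𝕜}
    (hf : HasFDerivAt f f' q) :
    HasFDerivAt (shear₃ f) ((fst 𝕜 E (F × 𝕜)).prod ((fst 𝕜 F 𝕜 ∘L snd 𝕜 E (F × 𝕜)).prod f')) q :=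
  hasFDerivAt_fst.prodMk ((hasFDerivAt_fst.comp q hasFDerivAt_snd).prodMk hf)

variable [FiniteDimensional 𝕜 E] [FiniteDimensional 𝕜 F]

theorem det_fderiv_shear₁ {f : 𝕜 × F → 𝕜} {q : 𝕜 × F} (hf : DifferentiableAt 𝕜 f q) :
    (fderiv 𝕜 (shear₁ f) q).det = deriv (fun s => f (s, q.2)) q.1 := by
  have hpartial : HasDerivAt (fun s => f (s, q.2)) (fderiv 𝕜 f q (1, 0)) q.1 :=
    hf.hasFDerivAt.comp_hasDerivAt q.1 ((hasDerivAt_id _).prodMk (hasDerivAt_const _ _))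
  rw [hf.hasFDerivAt.shear₁.fderiv, hpartial.deriv, ContinuousLinearMap.det,
    LinearMap.det_eq_det_fst_comp_comp_inl (LinearMap.ext fun _ => rfl), LinearMap.det_ring]
  rfl

theorem det_fderiv_shear₂ {f : E × 𝕜 × F → 𝕜} {q : E × 𝕜 × F} (hf : DifferentiableAt 𝕜 f q) :
    (fderiv 𝕜 (shear₂ f) q).det = deriv (fun s => f (q.1, s, q.2.2)) q.2.1 := by
  have hpartial : HasDerivAt (fun s => f (q.1, s, q.2.2)) (fderiv 𝕜 f q (0, 1, 0)) q.2.1 :=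
    hf.hasFDerivAt.comp_hasDerivAt q.2.1
      ((hasDerivAt_const _ _).prodMk ((hasDerivAt_id _).prodMk (hasDerivAt_const _ _)))
  rw [hf.hasFDerivAt.shear₂.fderiv, hpartial.deriv, ContinuousLinearMap.det,
    LinearMap.det_eq_det_snd_comp_comp_inr (LinearMap.ext fun _ => rfl),
    LinearMap.det_eq_det_fst_comp_comp_inl (LinearMap.ext fun _ => rfl), LinearMap.det_ring]
  rfl

theorem det_fderiv_shear₃ {f : E × F × 𝕜 → 𝕜} {q : E × F × 𝕜} (hf : DifferentiableAt 𝕜 f q) :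
    (fderiv 𝕜 (shear₃ f) q).det = deriv (fun s => f (q.1, q.2.1, s)) q.2.2 := by
  have hpartial : HasDerivAt (fun s => f (q.1, q.2.1, s)) (fderiv 𝕜 f q (0, 0, 1)) q.2.2 :=
    hf.hasFDerivAt.comp_hasDerivAt q.2.2
      ((hasDerivAt_const _ _).prodMk ((hasDerivAt_const _ _).prodMk (hasDerivAt_id _)))
  rw [hf.hasFDerivAt.shear₃.fderiv, hpartial.deriv, ContinuousLinearMap.det,
    LinearMap.det_eq_det_snd_comp_comp_inr (LinearMap.ext fun _ => rfl),
    LinearMap.det_eq_det_snd_comp_comp_inr (LinearMap.ext fun _ => rfl), LinearMap.det_ring]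
  rfl

end Shear

theorem triangular_map_volume_preserving_iff_general
    (g₁ g₂ g₃ : ℝ → ℝ → ℝ → ℝ)
    (hg₁ : ContDiff ℝ 1 (fun p : ℝ × ℝ × ℝ => g₁ p.1 p.2.1 p.2.2))
    (hg₂ : ContDiff ℝ 1 (fun p : ℝ × ℝ × ℝ => g₂ p.1 p.2.1 p.2.2))
    (hg₃ : ContDiff ℝ 1 (fun p : ℝ × ℝ × ℝ => g₃ p.1 p.2.1 p.2.2))
    (Φ : ℝ × ℝ × ℝ → ℝ × ℝ × ℝ) (hΦ : ContDiff ℝ 1 Φ)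
    (hrel : ∀ p : ℝ × ℝ × ℝ,
      p.1 = g₁ (Φ p).1 p.2.1 p.2.2 ∧
      (Φ p).2.1 = g₂ (Φ p).1 p.2.1 p.2.2 ∧
      (Φ p).2.2 = g₃ (Φ p).1 (Φ p).2.1 p.2.2)
    (p : ℝ × ℝ × ℝ) :
    LinearMap.det (fderiv ℝ Φ p).toLinearMap = 1 ↔
      deriv (fun s => g₁ s p.2.1 p.2.2) (Φ p).1 =
        deriv (fun s => g₂ (Φ p).1 s p.2.2) p.2.1 *
          deriv (fun s => g₃ (Φ p).1 (Φ p).2.1 s) p.2.2 := by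
  set G₁ : ℝ × ℝ × ℝ → ℝ := fun q => g₁ q.1 q.2.1 q.2.2
  set G₂ : ℝ × ℝ × ℝ → ℝ := fun q => g₂ q.1 q.2.1 q.2.2
  set G₃ : ℝ × ℝ × ℝ → ℝ := fun q => g₃ q.1 q.2.1 q.2.2
  set S := shear₁ fun q : ℝ × ℝ × ℝ => (Φ q).1
  have hS : DifferentiableAt ℝ S p :=
    ((hΦ.differentiable one_ne_zero).fst p).hasFDerivAt.shear₁.differentiableAt
  have hd₁ : DifferentiableAt ℝ G₁ (S p) := hg₁.differentiable one_ne_zero _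
  have hd₂ : DifferentiableAt ℝ G₂ (S p) := hg₂.differentiable one_ne_zero _
  have hd₃ : DifferentiableAt ℝ G₃ (shear₂ G₂ (S p)) := hg₃.differentiable one_ne_zero _
  have hinv : shear₁ G₁ ∘ S = id := funext fun q => by simp [G₁, S, shear₁, ← (hrel q).1]
  have hfactor : Φ = shear₃ G₃ ∘ shear₂ G₂ ∘ S :=
    funext fun q => by simp [G₂, G₃, S, shear₁, shear₂, shear₃, ← (hrel q).2.1, ← (hrel q).2.2]
  have h₁ : (fderiv ℝ (shear₁ G₁) (S p)).det = deriv (fun s => g₁ s p.2.1 p.2.2) (Φ p).1 :=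
    det_fderiv_shear₁ hd₁
  have h₂ : (fderiv ℝ (shear₂ G₂) (S p)).det = deriv (fun s => g₂ (Φ p).1 s p.2.2) p.2.1 :=
    det_fderiv_shear₂ hd₂
  have h₃ : (fderiv ℝ (shear₃ G₃) (shear₂ G₂ (S p))).det =
      deriv (fun s => g₃ (Φ p).1 (Φ p).2.1 s) p.2.2 := by
    rw [det_fderiv_shear₃ hd₃]
    simp only [S, shear₁, shear₂, G₂, G₃, ← (hrel p).2.1]
  have hdetS : deriv (fun s => g₁ s p.2.1 p.2.2) (Φ p).1 * (fderiv ℝ S p).det = 1 := by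
    rw [← h₁, ← det_fderiv_comp hd₁.hasFDerivAt.shear₁.differentiableAt hS, hinv, fderiv_id,
      ContinuousLinearMap.det, ContinuousLinearMap.coe_id, LinearMap.det_id]
  have hdetΦ : (fderiv ℝ Φ p).det = deriv (fun s => g₂ (Φ p).1 s p.2.2) p.2.1 *
      deriv (fun s => g₃ (Φ p).1 (Φ p).2.1 s) p.2.2 * (fderiv ℝ S p).det := by
    have hd₂' := hd₂.hasFDerivAt.shear₂.differentiableAt
    rw [← h₂, ← h₃, hfactor, det_fderiv_comp (g := shear₂ G₂ ∘ S)
      hd₃.hasFDerivAt.shear₃.differentiableAt (hd₂'.comp p hS), det_fderiv_comp hd₂' hS, Function.comp_apply, mul_left_comm, mul_assoc]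
  change (fderiv ℝ Φ p).det = 1 ↔ _
  rw [hdetΦ, ← hdetS, mul_left_inj' (right_ne_zero_of_mul_eq_one hdetS), eq_comm]

/-- A triangular map in ℝ³ of the form `x₁ = g₁(x₁',x₂,x₃)`,
`x₂' = g₂(x₁',x₂,x₃)`, `x₃' = g₃(x₁',x₂',x₃)` is volume-preserving iff
`∂x₁/∂x₁' = (∂x₂'/∂x₂)(∂x₃'/∂x₃)`. -/
theorem triangular_map_volume_preserving_iff
    (g₁ g₂ g₃ : ℝ → ℝ → ℝ → ℝ)
    (hg₁ : ContDiff ℝ 1 (fun p : ℝ × ℝ × ℝ => g₁ p.1 p.2.1 p.2.2))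
    (hg₂ : ContDiff ℝ 1 (fun p : ℝ × ℝ × ℝ => g₂ p.1 p.2.1 p.2.2))
    (hg₃ : ContDiff ℝ 1 (fun p : ℝ × ℝ × ℝ => g₃ p.1 p.2.1 p.2.2))
    (hg₁' : ∀ a b c, deriv (fun s => g₁ s b c) a ≠ 0)
    (Φ : ℝ × ℝ × ℝ → ℝ × ℝ × ℝ) (hΦ : ContDiff ℝ 1 Φ)
    (hrel : ∀ p : ℝ × ℝ × ℝ,
      p.1 = g₁ (Φ p).1 p.2.1 p.2.2 ∧
      (Φ p).2.1 = g₂ (Φ p).1 p.2.1 p.2.2 ∧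
      (Φ p).2.2 = g₃ (Φ p).1 (Φ p).2.1 p.2.2)
    (p : ℝ × ℝ × ℝ) :
    LinearMap.det (fderiv ℝ Φ p).toLinearMap = 1 ↔
      deriv (fun s => g₁ s p.2.1 p.2.2) (Φ p).1 =
        deriv (fun s => g₂ (Φ p).1 s p.2.2) p.2.1 *
          deriv (fun s => g₃ (Φ p).1 (Φ p).2.1 s) p.2.2 :=
  triangular_map_volume_preserving_iff_general g₁ g₂ g₃ hg₁ hg₂ hg₃ Φ hΦ hrel p
end

section
/- Every C¹ vector field f possessing a first integral I with nonvanishing gradient can locally be written in skew-gradient form: there exists a skew-symmetric matrix function S(x) with f(x) = S(x)∇I(x), on the set where ∇I(x) ≠ 0. In fact one can take S(x) = (f(x)∇I(x)ᵀ - ∇I(x)f(x)ᵀ)/|∇I(x)|². -/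
/-!
For a vector `w` orthogonal to `v ≠ 0`, the matrix `(w vᵀ - v wᵀ) / (v ⬝ v)` is visibly
skew-symmetric, and applied to `v` it gives `((v ⬝ v) w - (w ⬝ v) v) / (v ⬝ v) = w`.
At each point, take `v = ∇I(x)` and `w = f(x)`; orthogonality is the first-integral condition.
-/

open Matrix

namespace Matrix

variable {ι K : Type*} [Fintype ι] [Field K]

noncomputable def skewGradientMatrix (v w : ι → K) : Matrix ι ι K :=
  (v ⬝ᵥ v)⁻¹ • (vecMulVec w v - vecMulVec v w)

theorem skewGradientMatrix_apply (v w : ι → K) (i j : ι) :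
    skewGradientMatrix v w i j = (w i * v j - v i * w j) / (v ⬝ᵥ v) := by
  simp only [skewGradientMatrix, smul_apply, sub_apply, vecMulVec_apply, smul_eq_mul]
  exact inv_mul_eq_div _ _

theorem transpose_skewGradientMatrix (v w : ι → K) :
    (skewGradientMatrix v w)ᵀ = -skewGradientMatrix v w := by
  simp only [skewGradientMatrix, transpose_smul, transpose_sub, transpose_vecMulVec, ← smul_neg,
    neg_sub]

theorem skewGradientMatrix_mulVec {v w : ι → K} (hv : v ⬝ᵥ v ≠ 0) (hvw : v ⬝ᵥ w = 0) :
    skewGradientMatrix v w *ᵥ v = w := by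
  have hwv : w ⬝ᵥ v = 0 := dotProduct_comm w v ▸ hvw
  simp only [skewGradientMatrix, smul_mulVec, sub_mulVec, vecMulVec_mulVec, hwv,
    MulOpposite.op_zero, zero_smul, sub_zero, op_smul_eq_smul, smul_smul, inv_mul_cancel₀ hv,
    one_smul]

end Matrix

theorem skew_gradient_form_general (n : ℕ)
    (f : (Fin n → ℝ) → (Fin n → ℝ))
    (g : (Fin n → ℝ) → (Fin n → ℝ))
    (hint : ∀ x, g x ⬝ᵥ f x = 0)
    (x : Fin n → ℝ) (hx : g x ≠ 0)
    (S : Matrix (Fin n) (Fin n) ℝ)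
    (hSdef : S = Matrix.of fun i j =>
      (f x i * g x j - g x i * f x j) / (∑ k, g x k ^ 2)) :
    Sᵀ = -S ∧ S.mulVec (g x) = f x := by
  have hS : S = skewGradientMatrix (g x) (f x) := by
    ext i j
    simp only [hSdef, of_apply, skewGradientMatrix_apply, dotProduct, sq]
  subst hS
  exact ⟨transpose_skewGradientMatrix _ _,
    skewGradientMatrix_mulVec (mt dotProduct_self_eq_zero.mp hx) (hint x)⟩

/-- A vector field with a first integral `I` can be written in skew-gradient
form `f = S ∇I` where `∇I ≠ 0`, with
`S = (f ∇Iᵀ - ∇I fᵀ)/‖∇I‖²`. -/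
theorem skew_gradient_form (n : ℕ)
    (f : (Fin n → ℝ) → (Fin n → ℝ)) (hf : ContDiff ℝ 1 f)
    (I : (Fin n → ℝ) → ℝ) (hI : ContDiff ℝ 1 I)
    (g : (Fin n → ℝ) → (Fin n → ℝ))
    (hg : ∀ x, g x = fun i => fderiv ℝ I x (Pi.single i 1))
    (hint : ∀ x, g x ⬝ᵥ f x = 0)
    (x : Fin n → ℝ) (hx : g x ≠ 0)
    (S : Matrix (Fin n) (Fin n) ℝ)
    (hSdef : S = Matrix.of fun i j =>
      (f x i * g x j - g x i * f x j) / (∑ k, g x k ^ 2)) :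
    Sᵀ = -S ∧ S.mulVec (g x) = f x :=
  skew_gradient_form_general n f g hint x hx S hSdef
end

section
/- The two-integral discrete scheme preserves both integrals: if (x'ᵢ - xᵢ)/h = S̄ᵢⱼₖ ∇̄I(x,x')ⱼ ∇̄J(x,x')ₖ with S̄ a completely antisymmetric 3-tensor, and ∇̄I, ∇̄J are discrete gradients of I and J respectively, then I(x') = I(x) and J(x') = J(x). -/
/-!
Write the step as `x' - x = h • v` with `vᵢ = ∑ⱼₖ Sᵢⱼₖ (∇̄I)ⱼ (∇̄J)ₖ`. Antisymmetry of `S` in its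
first two indices makes `v ⬝ᵥ ∇̄I` a sum of an antisymmetric matrix over all index pairs, hence
zero; antisymmetry in the first and last indices does the same for `v ⬝ᵥ ∇̄J`. The discrete
gradient property then turns `(x' - x) ⬝ᵥ ∇̄I = 0` into `I x' = I x`, and likewise for `J`.
-/

open Matrix

variable {ι : Type*} [Fintype ι]

theorem Finset.sum_sum_eq_zero_of_antisymm {M : Type*} [AddCommGroup M] [IsAddTorsionFree M]
    (T : ι → ι → M) (hT : ∀ i j, T i j = -T j i) : ∑ i, ∑ j, T i j = 0 := by
  refine self_eq_neg.mp ?_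
  calc ∑ i, ∑ j, T i j = ∑ j, ∑ i, T i j := Finset.sum_comm
    _ = ∑ j, ∑ i, -T j i :=
      Finset.sum_congr rfl fun j _ => Finset.sum_congr rfl fun i _ => hT i j
    _ = -∑ i, ∑ j, T i j := by simp only [Finset.sum_neg_distrib]

section Contraction

variable {R : Type*} [CommRing R] [IsAddTorsionFree R] (S : ι → ι → ι → R) (a b : ι → R)

theorem dotProduct_contract_left_eq_zero (hS : ∀ i j k, S i j k = -S j i k) :
    (fun i => ∑ j, ∑ k, S i j k * a j * b k) ⬝ᵥ a = 0 := by
  have hrearr : (fun i => ∑ j, ∑ k, S i j k * a j * b k) ⬝ᵥ a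
      = ∑ i, ∑ j, (∑ k, S i j k * b k) * a i * a j := by
    simp only [dotProduct, Finset.sum_mul]
    exact Finset.sum_congr rfl fun _ _ => Finset.sum_congr rfl fun _ _ =>
      Finset.sum_congr rfl fun _ _ => by ring
  rw [hrearr]
  refine Finset.sum_sum_eq_zero_of_antisymm _ fun i j => ?_
  simp only [hS i j, neg_mul, Finset.sum_neg_distrib]
  ring

theorem dotProduct_contract_right_eq_zero (hS : ∀ i j k, S i j k = -S k j i) :
    (fun i => ∑ j, ∑ k, S i j k * a j * b k) ⬝ᵥ b = 0 := by
  have hrearr : (fun i => ∑ j, ∑ k, S i j k * a j * b k) ⬝ᵥ b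
      = ∑ i, ∑ k, (∑ j, S i j k * a j) * b i * b k := by
    simp only [dotProduct, Finset.sum_mul]
    refine Finset.sum_congr rfl fun _ _ => ?_
    rw [Finset.sum_comm]
    exact Finset.sum_congr rfl fun _ _ => Finset.sum_congr rfl fun _ _ => by ring
  rw [hrearr]
  refine Finset.sum_sum_eq_zero_of_antisymm _ fun i k => ?_
  simp only [hS i _ k, neg_mul, Finset.sum_neg_distrib]
  ring

end Contraction

theorem two_integral_scheme_preserves_integrals_general (n : ℕ)
    (I J : (Fin n → ℝ) → ℝ)
    (DI DJ : (Fin n → ℝ) → (Fin n → ℝ) → (Fin n → ℝ))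
    (hDI : ∀ x x', (x' - x) ⬝ᵥ DI x x' = I x' - I x)
    (hDJ : ∀ x x', (x' - x) ⬝ᵥ DJ x x' = J x' - J x)
    (S : (Fin n → ℝ) → (Fin n → ℝ) → Fin n → Fin n → Fin n → ℝ)
    (hS12 : ∀ x x' i j k, S x x' i j k = -S x x' j i k)
    (hS23 : ∀ x x' i j k, S x x' i j k = -S x x' i k j)
    (h : ℝ) (x x' : Fin n → ℝ)
    (hstep : ∀ i, x' i - x i =
      h * ∑ j, ∑ k, S x x' i j k * DI x x' j * DJ x x' k) :
    I x' = I x ∧ J x' = J x := by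
  have hS13 : ∀ i j k, S x x' i j k = -S x x' k j i := fun i j k => by
    rw [hS12, hS23 x x' j i k, hS12 x x' j k i, neg_neg]
  have hdiff : x' - x = h • fun i => ∑ j, ∑ k, S x x' i j k * DI x x' j * DJ x x' k :=
    funext hstep
  have hI : (x' - x) ⬝ᵥ DI x x' = 0 := by
    rw [hdiff, smul_dotProduct, dotProduct_contract_left_eq_zero _ _ _ (hS12 x x'), smul_zero]
  have hJ : (x' - x) ⬝ᵥ DJ x x' = 0 := by
    rw [hdiff, smul_dotProduct, dotProduct_contract_right_eq_zero _ _ _ hS13, smul_zero]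
  exact ⟨sub_eq_zero.mp (hDI x x' ▸ hI), sub_eq_zero.mp (hDJ x x' ▸ hJ)⟩

/-- The two-integral discrete-gradient scheme with a completely antisymmetric
3-tensor preserves both integrals. -/
theorem two_integral_scheme_preserves_integrals (n : ℕ)
    (I J : (Fin n → ℝ) → ℝ)
    (DI DJ : (Fin n → ℝ) → (Fin n → ℝ) → (Fin n → ℝ))
    (hDI : ∀ x x', (x' - x) ⬝ᵥ DI x x' = I x' - I x)
    (hDJ : ∀ x x', (x' - x) ⬝ᵥ DJ x x' = J x' - J x)
    (S : (Fin n → ℝ) → (Fin n → ℝ) → Fin n → Fin n → Fin n → ℝ)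
    (hS12 : ∀ x x' i j k, S x x' i j k = -S x x' j i k)
    (hS23 : ∀ x x' i j k, S x x' i j k = -S x x' i k j)
    (h : ℝ) (hh : 0 < h) (x x' : Fin n → ℝ)
    (hstep : ∀ i, x' i - x i =
      h * ∑ j, ∑ k, S x x' i j k * DI x x' j * DJ x x' k) :
    I x' = I x ∧ J x' = J x :=
  two_integral_scheme_preserves_integrals_general n I J DI DJ hDI hDJ S hS12 hS23 h x x' hstep
end
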